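/- arXiv:2601.06070 — 8 statements merged into one kernel-verified Lean document; each statement's English description precedes it below -/
import Mathlib

section
/- Let q ∈ ℂ with 0 < |q| < 1, let a ∈ ℂ, let x, t ∈ ℂ with x ≠ 0, t ≠ 0, and suppose q^{m}·t/x ≠ 1 for every integer m ≥ 1. Define F(u) = ∏_{k=0}^∞ (1 − a q^{k+1} u)/(1 − q^{k+1} u) (the infinite products converge for 0 < |q| < 1). Then the q-derivative in t of the kernel K(t,x) = F(t/x) satisfies (K(t,x) − K(qt,x))/((1−q)t) = (q/((1−q)x))·(K(t,x) − a·K(t, x/q)); equivalently, D_q,t K(t,x) = (q/((1−q)x))·(1 − a·T_x^{-1}) K(t,x). -/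
/-- The `q`-analogue of the Euler kernel:
`F(u) = ∏_{k=0}^∞ (1 − a q^{k+1} u)/(1 − q^{k+1} u)`. -/
noncomputable def kernelF (q a u : ℂ) : ℂ :=
  ∏' k : ℕ, (1 - a * q ^ (k + 1) * u) / (1 - q ^ (k + 1) * u)

/-!
The `k`-th factor of `F(u)` is `1 + O(q^k)`, so the product converges, and splitting off the
factor `k = 0` gives the functional equation `F(u) (1 - q u) = (1 - a q u) F(q u)`.
With `u = t / x` both `q t / x` and `t / (x / q)` equal `q u`, so the `q`-difference identity
is this functional equation divided by `(1 - q) t`.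
-/

open Asymptotics Topology

lemma isBigO_div_one_sub_sub_one (a : ℂ) :
    (fun w : ℂ => (1 - a * w) / (1 - w) - 1) =O[𝓝 0] id := by
  have hd : DifferentiableAt ℂ (fun w : ℂ => (1 - a * w) / (1 - w)) 0 := by
    fun_prop (disch := norm_num)
  have := hd.isBigO_sub
  simp only [sub_zero, mul_zero, div_one] at this
  exact this

lemma multipliable_kernelF_factors (a u : ℂ) {q : ℂ} (hq : ‖q‖ < 1) :
    Multipliable fun k : ℕ => (1 - a * q ^ (k + 1) * u) / (1 - q ^ (k + 1) * u) := by
  have hw : Summable fun k : ℕ => ‖q ^ (k + 1) * u‖ := by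
    simpa [norm_mul, norm_pow, pow_succ, mul_assoc] using
      (summable_geometric_of_lt_one (norm_nonneg q) hq).mul_right (‖q‖ * ‖u‖)
  convert multipliable_one_add_of_summable
    ((isBigO_div_one_sub_sub_one a).comp_summable_norm hw) using 2 with k
  simp only [add_sub_cancel, mul_assoc]

theorem kernelF_mul_one_sub (a u : ℂ) {q : ℂ} (hq : ‖q‖ < 1) (hu : q * u ≠ 1) :
    kernelF q a u * (1 - q * u) = (1 - a * q * u) * kernelF q a (q * u) := by
  have hshift : kernelF q a u = (1 - a * q * u) / (1 - q * u) * kernelF q a (q * u) := by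
    rw [kernelF, tprod_eq_zero_mul']
    · simp only [zero_add, pow_succ, pow_zero, one_mul, kernelF, mul_assoc]
    · convert multipliable_kernelF_factors a (q * u) hq using 3 <;> ring
  rw [hshift, div_mul_eq_mul_div, div_mul_cancel₀ _ (sub_ne_zero.2 hu.symm)]

theorem kernel_qDeriv_general (q a x t : ℂ) (hq1 : ‖q‖ < 1)
    (hx : x ≠ 0) (ht : t ≠ 0) (h : ∀ m : ℕ, 1 ≤ m → q ^ m * t / x ≠ 1) :
    (kernelF q a (t / x) - kernelF q a (q * t / x)) / ((1 - q) * t) =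
      (q / ((1 - q) * x)) *
        (kernelF q a (t / x) - a * kernelF q a (t / (x / q))) := by
  have hq : 1 - q ≠ 0 := sub_ne_zero.2 (by rintro rfl; simp at hq1)
  have hqu : q * (t / x) ≠ 1 := by simpa [mul_div_assoc] using h 1 le_rfl
  have key := kernelF_mul_one_sub a (t / x) hq1 hqu
  have hT : t / (x / q) = q * (t / x) := by rw [div_div_eq_mul_div, mul_comm, mul_div_assoc]
  rw [mul_div_assoc, hT]
  generalize kernelF q a (t / x) = A, kernelF q a (q * (t / x)) = B at key ⊢
  field_simp at key ⊢
  linear_combination key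

/-- The `q`-derivative in `t` of the kernel `K(t,x) = F(t/x)` satisfies
`D_{q,t} K(t,x) = (q/((1−q)x))·(1 − a T_x⁻¹) K(t,x)`. -/
theorem kernel_qDeriv (q a x t : ℂ) (hq0 : 0 < ‖q‖) (hq1 : ‖q‖ < 1)
    (hx : x ≠ 0) (ht : t ≠ 0) (h : ∀ m : ℕ, 1 ≤ m → q ^ m * t / x ≠ 1) :
    (kernelF q a (t / x) - kernelF q a (q * t / x)) / ((1 - q) * t) =
      (q / ((1 - q) * x)) *
        (kernelF q a (t / x) - a * kernelF q a (t / (x / q))) :=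
  kernel_qDeriv_general q a x t hq1 hx ht h
end

section
/- Let q ∈ ℂ with 0 < |q| < 1, let a ∈ ℂ, let τ, x ∈ ℂ with τ ≠ 0, x ≠ 0, and suppose q^{m}·τ/x ≠ 1 for every integer m ≥ 0. Let f : ℂ → ℂ be such that the families n ↦ f(τqⁿ)·F(τqⁿ/x)·τqⁿ and n ↦ f(τqⁿ)·F(τqⁿ/(qx))·τqⁿ (n ≥ 0) are summable. Then ∫₀^τ f(qt)·F(t/x) d_q t = q⁻¹ ∫₀^τ f(t)·F(t/(qx)) d_q t − ((1−q)/q)·τ·f(τ)·F(τ/(qx)). (This is the commutation relation E_λ[T_x f](x) = q^{−λ−1} T_x E_λ[f](x) − boundary term, for the q-Euler transform E_λ[f](x) = x^λ ∫₀^τ f(t) F(t/x) d_q t with a = q^{−λ}, written with the prefactor x^λ removed; the boundary factor uses F(τ/(qx)) = ((1 − aτ/x)/(1 − τ/x))·F(τ/x).) -/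
/-- Commutation of the `q`-Euler transform with the `q`-shift:
`∫₀^τ f(qt) F(t/x) d_q t = q⁻¹ ∫₀^τ f(t) F(t/(qx)) d_q t − ((1−q)/q)·τ·f(τ)·F(τ/(qx))`. -/
theorem euler_transform_qShift (q a τ x : ℂ) (hq0 : 0 < ‖q‖) (hq1 : ‖q‖ < 1)
    (hτ : τ ≠ 0) (hx : x ≠ 0) (h : ∀ m : ℕ, q ^ m * τ / x ≠ 1)
    (f : ℂ → ℂ)
    (h1 : Summable (fun n : ℕ =>
      f (τ * q ^ n) * kernelF q a (τ * q ^ n / x) * (τ * q ^ n)))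
    (h2 : Summable (fun n : ℕ =>
      f (τ * q ^ n) * kernelF q a (τ * q ^ n / (q * x)) * (τ * q ^ n))) :
    (1 - q) * ∑' n : ℕ, f (q * (τ * q ^ n)) * kernelF q a (τ * q ^ n / x) * (τ * q ^ n) =
      q⁻¹ * ((1 - q) *
          ∑' n : ℕ, f (τ * q ^ n) * kernelF q a (τ * q ^ n / (q * x)) * (τ * q ^ n))
        - ((1 - q) / q) * τ * f τ * kernelF q a (τ / (q * x)) := by
  have hq : q ≠ 0 := by
    intro hqz; rw [hqz, norm_zero] at hq0; exact lt_irrefl 0 hq0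
  set g : ℕ → ℂ := fun n => f (τ * q ^ n) * kernelF q a (τ * q ^ n / (q * x)) * (τ * q ^ n)
    with hg
  have key : ∀ n : ℕ,
      f (q * (τ * q ^ n)) * kernelF q a (τ * q ^ n / x) * (τ * q ^ n) = q⁻¹ * g (n + 1) := by
    intro n
    have h1' : q * (τ * q ^ n) = τ * q ^ (n + 1) := by ring
    have h2' : τ * q ^ (n + 1) / (q * x) = τ * q ^ n / x := by
      field_simp; ring
    rw [hg]
    simp only [h1', h2']
    field_simp
    ring
  have hshift : (∑' n : ℕ, f (q * (τ * q ^ n)) * kernelF q a (τ * q ^ n / x) * (τ * q ^ n))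
      = q⁻¹ * ((∑' n : ℕ, g n) - g 0) := by
    calc (∑' n : ℕ, f (q * (τ * q ^ n)) * kernelF q a (τ * q ^ n / x) * (τ * q ^ n))
        = ∑' n : ℕ, q⁻¹ * g (n + 1) := tsum_congr key
      _ = q⁻¹ * ∑' n : ℕ, g (n + 1) := tsum_mul_left
      _ = q⁻¹ * ((∑' n : ℕ, g n) - g 0) := by
          rw [Summable.tsum_eq_zero_add h2]; ring
  rw [hshift]
  have hg0 : g 0 = f τ * kernelF q a (τ / (q * x)) * τ := by
    simp [hg]
  rw [hg0]
  field_simp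
end

section
/- Let q ∈ ℂ with 0 < |q| < 1, let a ∈ ℂ, let τ, x ∈ ℂ with τ ≠ 0, x ≠ 0, and suppose q^{m}·τ/x ≠ 1 for every integer m ≥ 0. Let f : ℂ → ℂ be such that f(τqⁿ) → f(0) as n → ∞ and such that the families n ↦ f(τqⁿ)·F(τqⁿ/x)·τqⁿ, n ↦ f(τqⁿ)·F(τqⁿ/(qx))·τqⁿ, and n ↦ (D_q f)(τqⁿ)·F(τqⁿ/x)·τqⁿ are summable. Put Φ(x) = ∫₀^τ f(t)·F(t/x) d_q t. Then ∫₀^τ (D_q f)(t)·F(t/x) d_q t = (a·Φ(x) − Φ(qx))/((1−q)x) + f(τ)·F(τ/(qx)) − f(0). (This is the commutation relation E_λ[D_x f](x) = q^{−λ} D_x E_λ[f](x) + boundary term for the q-Euler transform E_λ[f](x) = x^λ ∫₀^τ f(t) F(t/x) d_q t with a = q^{−λ}, written with the prefactor x^λ removed.) -/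
/-! The kernel satisfies `F(u/q) = (1 - a u)/(1 - u) · F(u)`: split off the first factor of the
product. For `t = τqⁿ` this relation gives the q-analogue of integration by parts
`(1 - q)·(D_q f)(t)·F(t/x)·t = g(n) - g(n+1) + (a·f(t)F(t/x)t - f(t)F(t/(qx))t)/x`
with `g(n) = f(t)·F(t/(qx))`. Summing over `n`, the series of `g(n) - g(n+1)` telescopes to
`g(0) - lim g = f(τ)F(τ/(qx)) - f(0)`, since the product defining `F` converges uniformly near `0`,
so that `F` is continuous at `0` with `F(0) = 1`. -/

/-- The `q`-derivative: `(D_q f)(x) = (f(x) − f(qx)) / ((1−q)x)`. -/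
noncomputable def qDeriv (q : ℂ) (f : ℂ → ℂ) (x : ℂ) : ℂ :=
  (f x - f (q * x)) / ((1 - q) * x)

open Filter Topology

lemma Summable.hasSum_sub_succ_of_tendsto {G : Type*} [AddCommGroup G] [TopologicalSpace G]
    [IsTopologicalAddGroup G] [T2Space G] {g : ℕ → G} {l : G}
    (hs : Summable fun n => g n - g (n + 1)) (hg : Tendsto g atTop (𝓝 l)) :
    HasSum (fun n => g n - g (n + 1)) (g 0 - l) := by
  rw [hs.hasSum_iff_tendsto_nat]
  simpa only [Finset.sum_range_sub'] using tendsto_const_nhds.sub hg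

noncomputable def kernelFactor (a w : ℂ) : ℂ := (1 - a * w) / (1 - w)

lemma kernelF_eq_tprod (q a u : ℂ) :
    kernelF q a u = ∏' k : ℕ, kernelFactor a (q ^ (k + 1) * u) := by
  simp only [kernelF, kernelFactor, mul_assoc]

lemma norm_kernelFactor_sub_one_le (a : ℂ) {w : ℂ} (hw : ‖w‖ ≤ 1 / 2) :
    ‖kernelFactor a w - 1‖ ≤ 2 * ‖1 - a‖ * ‖w‖ := by
  have hw1 : 1 / 2 ≤ ‖1 - w‖ := by
    have := norm_sub_norm_le (1 : ℂ) w
    rw [norm_one] at this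
    linarith
  have hne : 1 - w ≠ 0 := norm_pos_iff.mp (by linarith)
  have : kernelFactor a w - 1 = (1 - a) * w / (1 - w) := by
    rw [kernelFactor]; field_simp; ring
  rw [this, norm_div, norm_mul, div_le_iff₀ (by linarith)]
  nlinarith [mul_nonneg (norm_nonneg (1 - a)) (norm_nonneg w)]

lemma multipliable_kernelFactor {q : ℂ} (hq : ‖q‖ < 1) (a u : ℂ) :
    Multipliable fun k : ℕ => kernelFactor a (q ^ k * u) := by
  have hsmall : ∀ᶠ k : ℕ in atTop, ‖q ^ k * u‖ ≤ 1 / 2 := by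
    have := ((tendsto_pow_atTop_nhds_zero_of_norm_lt_one hq).mul_const u).norm
    rw [zero_mul, norm_zero] at this
    exact this.eventually (eventually_le_nhds (by norm_num : (0 : ℝ) < 1 / 2))
  have hsum : Summable fun k : ℕ => ‖kernelFactor a (q ^ k * u) - 1‖ := by
    refine Summable.of_norm_bounded_eventually_nat
      ((summable_geometric_of_lt_one (norm_nonneg q) hq).mul_left (2 * ‖1 - a‖ * ‖u‖)) ?_
    filter_upwards [hsmall] with k hk
    rw [norm_norm]
    calc ‖kernelFactor a (q ^ k * u) - 1‖ ≤ 2 * ‖1 - a‖ * ‖q ^ k * u‖ :=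
          norm_kernelFactor_sub_one_le a hk
      _ = 2 * ‖1 - a‖ * ‖u‖ * ‖q‖ ^ k := by rw [norm_mul, norm_pow]; ring
  simpa using multipliable_one_add_of_summable hsum

lemma kernelF_div_self {q : ℂ} (hq0 : q ≠ 0) (hq1 : ‖q‖ < 1) (a u : ℂ) :
    kernelF q a (u / q) = kernelFactor a u * kernelF q a u := by
  have hpow : ∀ k : ℕ, q ^ (k + 1) * (u / q) = q ^ k * u := fun k => by
    rw [pow_succ, mul_assoc, mul_div_cancel₀ u hq0]
  rw [kernelF_eq_tprod, kernelF_eq_tprod]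
  simp only [hpow]
  have hmul : Multipliable fun k : ℕ => kernelFactor a (q ^ (k + 1) * u) := by
    simpa only [pow_succ, mul_assoc] using multipliable_kernelFactor hq1 a (q * u)
  rw [tprod_eq_zero_mul' (f := fun k => kernelFactor a (q ^ k * u)) hmul, pow_zero, one_mul]

lemma continuousAt_kernelF_zero {q : ℂ} (hq : ‖q‖ < 1) (a : ℂ) :
    ContinuousAt (kernelF q a) 0 := by
  set K := Metric.closedBall (0 : ℂ) (1 / 2)
  have hbound : ∀ k : ℕ, ∀ u ∈ K, ‖q ^ (k + 1) * u‖ ≤ ‖q‖ ^ k / 2 := by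
    intro k u hu
    rw [mem_closedBall_zero_iff] at hu
    calc ‖q ^ (k + 1) * u‖ = ‖q‖ ^ k * (‖q‖ * ‖u‖) := by
          rw [norm_mul, norm_pow, pow_succ, mul_assoc]
      _ ≤ ‖q‖ ^ k * (1 * (1 / 2)) := by gcongr
      _ = ‖q‖ ^ k / 2 := by ring
  have hhalf : ∀ k : ℕ, ∀ u ∈ K, ‖q ^ (k + 1) * u‖ ≤ 1 / 2 := fun k u hu =>
    (hbound k u hu).trans (by gcongr; exact pow_le_one₀ (norm_nonneg q) hq.le)
  have hcont : ∀ k : ℕ, ContinuousOn (fun u => kernelFactor a (q ^ (k + 1) * u) - 1) K := by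
    intro k
    refine ContinuousOn.sub (ContinuousOn.div (by fun_prop) (by fun_prop) fun u hu => ?_)
      continuousOn_const
    intro h0
    have := hhalf k u hu
    rw [← sub_eq_zero.mp h0, norm_one] at this
    norm_num at this
  have hprod := Summable.hasProdUniformlyOn_nat_one_add (isCompact_closedBall 0 (1 / 2))
    ((summable_geometric_of_lt_one (norm_nonneg q) hq).mul_left ‖1 - a‖)
    (.of_forall fun k u hu => ?_) hcont
  · have hK : ContinuousOn (kernelF q a) K := by
      simpa [K, ← kernelF_eq_tprod] using hprod.tendstoUniformlyOn.continuousOn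
        (Eventually.frequently (.of_forall fun s =>
          continuousOn_finsetProd s fun k _ => continuousOn_const.add (hcont k)))
    exact hK.continuousAt (Metric.closedBall_mem_nhds 0 (by norm_num))
  · calc ‖kernelFactor a (q ^ (k + 1) * u) - 1‖ ≤ 2 * ‖1 - a‖ * ‖q ^ (k + 1) * u‖ :=
          norm_kernelFactor_sub_one_le a (hhalf k u hu)
      _ ≤ 2 * ‖1 - a‖ * (‖q‖ ^ k / 2) := by gcongr; exact hbound k u hu
      _ = ‖1 - a‖ * ‖q‖ ^ k := by ring

@[simp]
lemma kernelF_zero (q a : ℂ) : kernelF q a 0 = 1 := by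
  simp [kernelF]

lemma sub_mul_qDeriv_mul_self {q : ℂ} (hq : q ≠ 1) (f : ℂ → ℂ) (t : ℂ) :
    (1 - q) * (qDeriv q f t * t) = f t - f (q * t) := by
  rcases eq_or_ne t 0 with rfl | ht
  · simp
  · have : 1 - q ≠ 0 := sub_ne_zero.mpr hq.symm
    rw [qDeriv]
    field_simp

lemma qDeriv_mul_kernelF {q : ℂ} (hq0 : q ≠ 0) (hq1 : ‖q‖ < 1) (a : ℂ) (f : ℂ → ℂ)
    {t x : ℂ} (htx : t / x ≠ 1) :
    (1 - q) * (qDeriv q f t * kernelF q a (t / x) * t) =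
      f t * kernelF q a (t / (q * x)) - f (q * t) * kernelF q a (t / x)
        + (a * (f t * kernelF q a (t / x) * t) - f t * kernelF q a (t / (q * x)) * t) / x := by
  have hq : q ≠ 1 := by rintro rfl; simp at hq1
  have hshift : kernelF q a (t / (q * x)) = kernelFactor a (t / x) * kernelF q a (t / x) := by
    rw [← kernelF_div_self hq0 hq1, div_div, mul_comm x]
  have hDq := sub_mul_qDeriv_mul_self hq f t
  have hu : 1 - t / x ≠ 0 := sub_ne_zero.mpr htx.symm
  have hfactor : (1 - a * (t / x)) / (1 - t / x) * (1 - t / x) = 1 - a * (t / x) :=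
    div_mul_cancel₀ _ hu
  rw [hshift, kernelFactor]
  linear_combination kernelF q a (t / x) * hDq - f t * kernelF q a (t / x) * hfactor

theorem euler_transform_qDeriv_general (q a τ x : ℂ) (hq0 : 0 < ‖q‖) (hq1 : ‖q‖ < 1)
    (h : ∀ m : ℕ, q ^ m * τ / x ≠ 1)
    (f : ℂ → ℂ)
    (hf0 : Filter.Tendsto (fun n : ℕ => f (τ * q ^ n)) Filter.atTop (nhds (f 0)))
    (h1 : Summable (fun n : ℕ =>
      f (τ * q ^ n) * kernelF q a (τ * q ^ n / x) * (τ * q ^ n)))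
    (h2 : Summable (fun n : ℕ =>
      f (τ * q ^ n) * kernelF q a (τ * q ^ n / (q * x)) * (τ * q ^ n)))
    (h3 : Summable (fun n : ℕ =>
      qDeriv q f (τ * q ^ n) * kernelF q a (τ * q ^ n / x) * (τ * q ^ n))) :
    (1 - q) * ∑' n : ℕ, qDeriv q f (τ * q ^ n) * kernelF q a (τ * q ^ n / x) * (τ * q ^ n) =
      (a * ((1 - q) * ∑' n : ℕ, f (τ * q ^ n) * kernelF q a (τ * q ^ n / x) * (τ * q ^ n))
          - (1 - q) * ∑' n : ℕ, f (τ * q ^ n) * kernelF q a (τ * q ^ n / (q * x)) * (τ * q ^ n))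
        / ((1 - q) * x)
      + f τ * kernelF q a (τ / (q * x)) - f 0 := by
  have hq : q ≠ 0 := norm_pos_iff.mp hq0
  have hq' : 1 - q ≠ 0 := sub_ne_zero.mpr (by rintro rfl; simp at hq1)
  set g : ℕ → ℂ := fun n => f (τ * q ^ n) * kernelF q a (τ * q ^ n / (q * x))
  have hstep : ∀ n, g n - g (n + 1) =
      (1 - q) * (qDeriv q f (τ * q ^ n) * kernelF q a (τ * q ^ n / x) * (τ * q ^ n))
        - (a * (f (τ * q ^ n) * kernelF q a (τ * q ^ n / x) * (τ * q ^ n))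
          - f (τ * q ^ n) * kernelF q a (τ * q ^ n / (q * x)) * (τ * q ^ n)) / x := by
    intro n
    have htx : τ * q ^ n / x ≠ 1 := by rw [mul_comm]; exact h n
    have hsucc : τ * q ^ (n + 1) = q * (τ * q ^ n) := by ring
    rw [qDeriv_mul_kernelF hq hq1 a f htx]
    simp only [g, hsucc, mul_div_mul_left _ _ hq]
    ring
  have hg : Tendsto g atTop (𝓝 (f 0)) := by
    have hu : Tendsto (fun n : ℕ => τ * q ^ n / (q * x)) atTop (𝓝 0) := by
      simpa using ((tendsto_pow_atTop_nhds_zero_of_norm_lt_one hq1).const_mul τ).div_const (q * x)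
    simpa using hf0.mul ((continuousAt_kernelF_zero hq1 a).tendsto.comp hu)
  have hsum := (h3.hasSum.mul_left (1 - q)).sub (((h1.hasSum.mul_left a).sub h2.hasSum).div_const x)
  rw [← funext hstep] at hsum
  have htel := (hsum.summable.hasSum_sub_succ_of_tendsto hg).unique hsum
  have hg0 : g 0 = f τ * kernelF q a (τ / (q * x)) := by simp [g]
  rw [← mul_assoc, mul_comm a, mul_assoc, ← mul_sub, mul_div_mul_left _ _ hq']
  linear_combination hg0 - htel

/-- Commutation of the `q`-Euler transform with the `q`-derivative:
`∫₀^τ (D_q f)(t) F(t/x) d_q t = (aΦ(x) − Φ(qx))/((1−q)x) + f(τ)F(τ/(qx)) − f(0)`,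
where `Φ(x) = ∫₀^τ f(t) F(t/x) d_q t`. -/
theorem euler_transform_qDeriv (q a τ x : ℂ) (hq0 : 0 < ‖q‖) (hq1 : ‖q‖ < 1)
    (hτ : τ ≠ 0) (hx : x ≠ 0) (h : ∀ m : ℕ, q ^ m * τ / x ≠ 1)
    (f : ℂ → ℂ)
    (hf0 : Filter.Tendsto (fun n : ℕ => f (τ * q ^ n)) Filter.atTop (nhds (f 0)))
    (h1 : Summable (fun n : ℕ =>
      f (τ * q ^ n) * kernelF q a (τ * q ^ n / x) * (τ * q ^ n)))
    (h2 : Summable (fun n : ℕ =>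
      f (τ * q ^ n) * kernelF q a (τ * q ^ n / (q * x)) * (τ * q ^ n)))
    (h3 : Summable (fun n : ℕ =>
      qDeriv q f (τ * q ^ n) * kernelF q a (τ * q ^ n / x) * (τ * q ^ n))) :
    (1 - q) * ∑' n : ℕ, qDeriv q f (τ * q ^ n) * kernelF q a (τ * q ^ n / x) * (τ * q ^ n) =
      (a * ((1 - q) * ∑' n : ℕ, f (τ * q ^ n) * kernelF q a (τ * q ^ n / x) * (τ * q ^ n))
          - (1 - q) * ∑' n : ℕ, f (τ * q ^ n) * kernelF q a (τ * q ^ n / (q * x)) * (τ * q ^ n))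
        / ((1 - q) * x)
      + f τ * kernelF q a (τ / (q * x)) - f 0 :=
  euler_transform_qDeriv_general q a τ x hq0 hq1 h f hf0 h1 h2 h3
end

section
/- Let q ∈ ℂ with q ≠ 0, 1, let M, N ≥ 1, let B₁,…,B_N be M×M complex matrices, let t₁,…,t_N ∈ ℂ, and let y : ℂ → ℂ^M. Fix x ∈ ℂ with x ≠ 0, x ≠ t_i and qx ≠ t_i for all i, and suppose y(x) − y(qx) = (1−q)·x·Σ_{i=1}^N (x − t_i)⁻¹ · B_i · y(x) (i.e., (D_q y)(x) = Σ_i B_i y(x)/(x − t_i)). Define Y₀(z) ∈ ℂ^{MN} to be the block vector whose i-th block is y(z)/(z − t_i). Then (x·I_{MN} − S/q)·(Y₀(x) − Y₀(qx))/((1−q)x) = (1/q)·(B − I_{MN})·Y₀(x), where S is the block-diagonal matrix with i-th diagonal block t_i·I_M and B is the MN×MN block matrix whose (i,j)-block equals B_j for every i. -/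
/-!
Every block of `B Y₀(x)` equals `s = ∑ⱼ Bⱼ y(x)/(x − tⱼ)`, and the hypothesis says
`y(qx) = y(x) − (1 − q) x s`. Substituting this, the `i`-th block of `D_q Y₀` becomes
`(s − Y₀ᵢ(x))/(qx − tᵢ)`, and the factor `x − tᵢ/q = (qx − tᵢ)/q` cancels the denominator,
leaving `(s − Y₀ᵢ(x))/q`.
-/

open Matrix

section Scalar

variable {K : Type*} [Field K] {q x t : K}

theorem qOkubo_block_eq (hq0 : q ≠ 0) (hq1 : q ≠ 1) (hx : x ≠ 0) (hxt : x ≠ t)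
    (hqxt : q * x ≠ t) (u s : K) :
    (x - q⁻¹ * t) * ((u / (x - t) - (u - (1 - q) * x * s) / (q * x - t)) / ((1 - q) * x)) =
      q⁻¹ * (s - u / (x - t)) := by
  have hxt' : x - t ≠ 0 := sub_ne_zero.mpr hxt
  have hqxt' : q * x - t ≠ 0 := sub_ne_zero.mpr hqxt
  have h1qx : (1 - q) * x ≠ 0 := mul_ne_zero (sub_ne_zero.mpr hq1.symm) hx
  have hdiff : u / (x - t) - (u - (1 - q) * x * s) / (q * x - t)
      = (1 - q) * x * ((s - u / (x - t)) / (q * x - t)) := by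
    rw [div_sub_div _ _ hxt' hqxt', sub_div' hxt', div_div, mul_div_assoc', mul_comm (x - t)]
    congr 1
    ring
  have hfactor : x - q⁻¹ * t = q⁻¹ * (q * x - t) := by
    field_simp
  rw [hdiff, mul_div_cancel_left₀ _ h1qx, hfactor, mul_assoc, mul_div_cancel₀ _ hqxt']

end Scalar

namespace Matrix

variable {ι κ R : Type*} [Fintype ι] [Fintype κ]

theorem smul_one_sub_smul_diagonal_mulVec [CommRing R] [DecidableEq ι] (a c : R) (d v : ι → R) :
    (a • (1 : Matrix ι ι R) - c • diagonal d) *ᵥ v = fun p => (a - c * d p) * v p := by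
  ext p
  simp [sub_mulVec, smul_mulVec, mulVec_diagonal, sub_mul, mul_assoc]

theorem of_blockRow_mulVec [NonUnitalNonAssocSemiring R] (B : ι → Matrix κ κ R)
    (v : ι × κ → R) :
    of (fun p r : ι × κ => B r.1 p.2 r.2) *ᵥ v = fun p => (∑ j, B j *ᵥ fun b => v (j, b)) p.2 := by
  ext p
  simp only [mulVec, dotProduct, of_apply, Finset.sum_apply, Fintype.sum_prod_type]

end Matrix

theorem okubo_system_general (q : ℂ) (hq0 : q ≠ 0) (hq1 : q ≠ 1)
    (M N : ℕ)
    (B : Fin N → Matrix (Fin M) (Fin M) ℂ) (t : Fin N → ℂ)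
    (y : ℂ → Fin M → ℂ) (x : ℂ) (hx : x ≠ 0)
    (hxt : ∀ i, x ≠ t i) (hqxt : ∀ i, q * x ≠ t i)
    (hsys : y x - y (q * x) = ((1 - q) * x) • ∑ i, (x - t i)⁻¹ • (B i).mulVec (y x)) :
    (x • (1 : Matrix (Fin N × Fin M) (Fin N × Fin M) ℂ)
        - q⁻¹ • Matrix.of (fun p r : Fin N × Fin M => if p = r then t p.1 else 0)).mulVec
      (fun p => (y x p.2 / (x - t p.1) - y (q * x) p.2 / (q * x - t p.1)) / ((1 - q) * x)) =
    q⁻¹ • ((Matrix.of (fun p r : Fin N × Fin M => (B r.1) p.2 r.2)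
        - 1).mulVec (fun p => y x p.2 / (x - t p.1))) := by
  set s := ∑ i, (x - t i)⁻¹ • (B i).mulVec (y x)
  have hyq : y (q * x) = y x - ((1 - q) * x) • s := by rw [← hsys, sub_sub_cancel]
  have hBY : of (fun p r : Fin N × Fin M => B r.1 p.2 r.2) *ᵥ (fun p => y x p.2 / (x - t p.1)) =
      fun p => s p.2 := by
    simp only [of_blockRow_mulVec, div_eq_inv_mul, s, ← smul_eq_mul, ← Pi.smul_def, mulVec_smul]
  rw [show of (fun p r : Fin N × Fin M => if p = r then t p.1 else 0) = diagonal (fun p => t p.1)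
    from rfl, smul_one_sub_smul_diagonal_mulVec, sub_mulVec, one_mulVec, hBY, hyq]
  funext p
  simpa [mul_assoc] using qOkubo_block_eq hq0 hq1 hx (hxt p.1) (hqxt p.1) (y x p.2) (s p.2)

/-- If `y` solves `D_q y = Σᵢ Bᵢ y/(x − tᵢ)`, then the block vector `Y₀` with `i`-th
block `y/(x − tᵢ)` solves the `q`-Okubo type system
`(x I − S/q) D_q Y₀ = (1/q)(B − I) Y₀`. -/
theorem okubo_system (q : ℂ) (hq0 : q ≠ 0) (hq1 : q ≠ 1)
    (M N : ℕ) (hM : 1 ≤ M) (hN : 1 ≤ N)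
    (B : Fin N → Matrix (Fin M) (Fin M) ℂ) (t : Fin N → ℂ)
    (y : ℂ → Fin M → ℂ) (x : ℂ) (hx : x ≠ 0)
    (hxt : ∀ i, x ≠ t i) (hqxt : ∀ i, q * x ≠ t i)
    (hsys : y x - y (q * x) = ((1 - q) * x) • ∑ i, (x - t i)⁻¹ • (B i).mulVec (y x)) :
    (x • (1 : Matrix (Fin N × Fin M) (Fin N × Fin M) ℂ)
        - q⁻¹ • Matrix.of (fun p r : Fin N × Fin M => if p = r then t p.1 else 0)).mulVec
      (fun p => (y x p.2 / (x - t p.1) - y (q * x) p.2 / (q * x - t p.1)) / ((1 - q) * x)) =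
    q⁻¹ • ((Matrix.of (fun p r : Fin N × Fin M => (B r.1) p.2 r.2)
        - 1).mulVec (fun p => y x p.2 / (x - t p.1))) :=
  okubo_system_general q hq0 hq1 M N B t y x hx hxt hqxt hsys
end

section
/- Let M, N ≥ 1 and let a_{i,j} ∈ ℂ for 0 ≤ i ≤ M, 0 ≤ j ≤ N, with a_{0,0} ≠ 0, a_{0,N} ≠ 0, a_{M,0} ≠ 0 and a_{M,N} ≠ 0 (so that the q-difference operator L = Σ_{i,j} a_{i,j} x^i T_x^j is Fuchsian). Write L₀(Y) = Σ_{j=0}^N a_{0,j} Yʲ, L_M(Y) = Σ_{j=0}^N a_{M,j} Yʲ, P₀(X) = Σ_{i=0}^M a_{i,0} Xⁱ and P_N(X) = Σ_{i=0}^M a_{i,N} Xⁱ. Let a₁,…,a_N be the roots (with multiplicity, in ℂ) of L₀, b₁,…,b_N the roots of L_M, c₁,…,c_M the roots of P₀, and d₁,…,d_M the roots of P_N. Then the q-Fuchs relation holds: a₁⋯a_N · d₁⋯d_M = b₁⋯b_N · c₁⋯c_M. -/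
open Polynomial

/-- The `q`-Fuchs relation: for a Fuchsian `q`-difference operator
`L = Σ_{i,j} a_{i,j} x^i T_x^j`, the products of the characteristic roots at
`x = 0, ∞` and `T_x = 0, ∞` satisfy `a₁⋯a_N·d₁⋯d_M = b₁⋯b_N·c₁⋯c_M`. -/
theorem q_fuchs_relation (M N : ℕ) (hM : 1 ≤ M) (hN : 1 ≤ N)
    (a : ℕ → ℕ → ℂ)
    (h00 : a 0 0 ≠ 0) (h0N : a 0 N ≠ 0) (hM0 : a M 0 ≠ 0) (hMN : a M N ≠ 0)
    (ar br : Fin N → ℂ) (cr dr : Fin M → ℂ)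
    (hL0 : (∑ j ∈ Finset.range (N + 1), C (a 0 j) * X ^ j)
      = C (a 0 N) * ∏ k, (X - C (ar k)))
    (hLM : (∑ j ∈ Finset.range (N + 1), C (a M j) * X ^ j)
      = C (a M N) * ∏ k, (X - C (br k)))
    (hP0 : (∑ i ∈ Finset.range (M + 1), C (a i 0) * X ^ i)
      = C (a M 0) * ∏ k, (X - C (cr k)))
    (hPN : (∑ i ∈ Finset.range (M + 1), C (a i N) * X ^ i)
      = C (a M N) * ∏ k, (X - C (dr k))) :
    (∏ k, ar k) * (∏ k, dr k) = (∏ k, br k) * (∏ k, cr k) := by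
  have key : ∀ (n : ℕ) (r : Fin n → ℂ), ∏ x : Fin n, -r x = (-1) ^ n * ∏ k, r k := by
    intro n r
    have h : ∀ x : Fin n, -r x = -1 * r x := fun x => by ring
    simp only [h, Finset.prod_mul_distrib, Finset.prod_const, Finset.card_univ,
      Fintype.card_fin]
  have e1 := congrArg (eval 0) hL0
  have e2 := congrArg (eval 0) hLM
  have e3 := congrArg (eval 0) hP0
  have e4 := congrArg (eval 0) hPN
  simp only [eval_finset_sum, eval_mul, eval_C, eval_pow, eval_X, eval_prod, eval_sub,
    zero_pow_eq, mul_ite, mul_one, mul_zero, Finset.sum_ite_eq',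
    Finset.mem_range, Nat.succ_pos, if_pos, zero_sub] at e1 e2 e3 e4
  rw [key] at e1 e2 e3 e4
  have hsgn : ((-1 : ℂ) ^ N * (-1) ^ M) ≠ 0 := by
    simp [pow_ne_zero]
  have hne : a M N * ((-1 : ℂ) ^ N * (-1) ^ M) ≠ 0 := mul_ne_zero hMN hsgn
  apply mul_left_cancel₀ hne
  have lhs : a M N * ((-1 : ℂ) ^ N * (-1) ^ M) * ((∏ k, ar k) * ∏ k, dr k) = a 0 0 := by
    rw [e1, e4]; ring
  have rhs : a M N * ((-1 : ℂ) ^ N * (-1) ^ M) * ((∏ k, br k) * ∏ k, cr k) = a 0 0 := by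
    rw [e3, e2]; ring
  rw [lhs, rhs]
end

section
/- Let n ≥ 1, let A be an n×n matrix whose entries are polynomials in ℂ[X], and let a ∈ ℂ be a simple root of det A, i.e., (X − a) divides the polynomial det A but (X − a)² does not. Then the evaluated matrix A(a) ∈ M_n(ℂ) has rank n − 1; equivalently, its kernel is one-dimensional. -/
open Polynomial Matrix Module

/-- If some entry of the adjugate of `M` is nonzero, then `M.rank ≥ n - 1`. -/
lemma aux_rank_ge_of_adjugate_ne_zero {n : ℕ} (M : Matrix (Fin n) (Fin n) ℂ) {i j : Fin n}
    (h : Matrix.adjugate M i j ≠ 0) : n - 1 ≤ M.rank := by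
  rw [Matrix.adjugate_apply] at h
  set N := M.updateRow j (Pi.single i 1) with hN
  have hNrank : N.rank = n := by
    have hu : IsUnit N := (Matrix.isUnit_iff_isUnit_det N).mpr (isUnit_iff_ne_zero.mpr h)
    simpa using Matrix.rank_of_isUnit N hu
  have hle : N.rank ≤ M.rank + 1 := by
    rw [Matrix.rank_eq_finrank_span_row, Matrix.rank_eq_finrank_span_row]
    have hsub : Submodule.span ℂ (Set.range N) ≤
        Submodule.span ℂ (Set.range M) ⊔ Submodule.span ℂ {(Pi.single i 1 : Fin n → ℂ)} := by
      rw [Submodule.span_le]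
      rintro _ ⟨k, rfl⟩
      by_cases hk : k = j
      · subst hk
        rw [hN, Matrix.updateRow_self]
        exact Submodule.mem_sup_right (Submodule.subset_span rfl)
      · rw [hN, Matrix.updateRow_ne hk]
        exact Submodule.mem_sup_left (Submodule.subset_span ⟨k, rfl⟩)
    calc finrank ℂ (Submodule.span ℂ (Set.range N))
        ≤ finrank ℂ ((Submodule.span ℂ (Set.range M)) ⊔
            (Submodule.span ℂ {(Pi.single i 1 : Fin n → ℂ)}) : Submodule ℂ (Fin n → ℂ)) :=
          Submodule.finrank_mono hsub
      _ ≤ finrank ℂ (Submodule.span ℂ (Set.range M)) +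
            finrank ℂ (Submodule.span ℂ {(Pi.single i 1 : Fin n → ℂ)}) :=
          Submodule.finrank_add_le_finrank_add_finrank _ _
      _ ≤ finrank ℂ (Submodule.span ℂ (Set.range M)) + 1 := by
          gcongr
          by_cases hv : (Pi.single i 1 : Fin n → ℂ) = 0
          · rw [hv, Submodule.span_zero_singleton, finrank_bot]; omega
          · exact le_of_eq (finrank_span_singleton hv)
  omega

/-- If `a` is a simple root of the determinant of a matrix of polynomials `A`,
then the evaluated matrix `A(a)` has rank `n − 1`. -/
theorem simple_root_rank (n : ℕ) (hn : 1 ≤ n)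
    (A : Matrix (Fin n) (Fin n) (Polynomial ℂ)) (a : ℂ)
    (hdvd : (Polynomial.X - Polynomial.C a) ∣ A.det)
    (hndvd : ¬ (Polynomial.X - Polynomial.C a) ^ 2 ∣ A.det) :
    (A.map (Polynomial.eval a)).rank = n - 1 := by
  classical
  set M := A.map (Polynomial.eval a) with hM
  have hMeq : M = (Polynomial.evalRingHom a).mapMatrix A := rfl
  have hdetM : M.det = 0 := by
    have h1 : M.det = Polynomial.eval a A.det := by
      rw [hMeq, ← RingHom.map_det]; rfl
    obtain ⟨g, hg⟩ := hdvd
    rw [h1, hg]; simp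
  -- upper bound
  have hub : M.rank ≤ n - 1 := by
    have h1 : M.rank ≤ n := by simpa using M.rank_le_card_width
    have h2 : M.rank ≠ n := by
      intro hr
      obtain ⟨v, hv0, hv⟩ := (Matrix.exists_mulVec_eq_zero_iff).mpr hdetM
      have hrange : LinearMap.range M.mulVecLin = ⊤ := by
        apply Submodule.eq_top_of_finrank_eq
        rw [← Matrix.rank, hr]
        simp [finrank_fintype_fun_eq_card]
      have hsurj : Function.Surjective M.mulVecLin := LinearMap.range_eq_top.mp hrange
      have hinj : Function.Injective M.mulVecLin :=
        (LinearMap.injective_iff_surjective).mpr hsurj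
      exact hv0 (hinj (by simpa [Matrix.mulVecLin_apply] using hv))
    omega
  -- lower bound
  have hlb : n - 1 ≤ M.rank := by
    by_contra hlt
    push_neg at hlt
    have hadj : Matrix.adjugate M = 0 := by
      ext i j
      by_contra hne
      exact absurd (aux_rank_ge_of_adjugate_ne_zero M hne) (by omega)
    have hdvdadj : ∀ i j, (X - C a) ∣ (Matrix.adjugate A) i j := by
      intro i j
      rw [Polynomial.dvd_iff_isRoot, Polynomial.IsRoot]
      have := (Polynomial.evalRingHom a).map_adjugate A
      rw [← hMeq, hadj] at this
      have h0 : (Polynomial.evalRingHom a).mapMatrix (Matrix.adjugate A) i j = (0 : Matrix (Fin n) (Fin n) ℂ) i j := by rw [this]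
      simpa using h0
    have hpowdvd : (X - C a) ^ n ∣ (Matrix.adjugate A).det := by
      rw [Matrix.det_apply']
      apply Finset.dvd_sum
      intro σ _
      apply Dvd.dvd.mul_left
      have : (X - C a) ^ n = ∏ _i : Fin n, (X - C a) := by simp
      rw [this]
      exact Finset.prod_dvd_prod_of_dvd _ _ fun i _ => hdvdadj (σ i) i
    rw [Matrix.det_adjugate] at hpowdvd
    simp only [Fintype.card_fin] at hpowdvd
    obtain ⟨g, hg⟩ := hdvd
    have hprime : Prime (X - C a) := Polynomial.prime_X_sub_C a
    have hgnd : ¬ (X - C a) ∣ g := by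
      intro ⟨h, hh⟩
      exact hndvd ⟨h, by rw [hg, hh]; ring⟩
    have hdvdg : (X - C a) ∣ g ^ (n - 1) := by
      rw [hg, mul_pow] at hpowdvd
      have hsplit : (X - C a) ^ n = (X - C a) ^ (n - 1) * (X - C a) := by
        rw [← pow_succ]
        congr 1
        omega
      rw [hsplit] at hpowdvd
      have hne : (X - C a) ^ (n - 1) ≠ 0 := pow_ne_zero _ (Polynomial.X_sub_C_ne_zero a)
      exact (mul_dvd_mul_iff_left hne).mp hpowdvd
    exact hgnd (hprime.dvd_of_dvd_pow hdvdg)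
  omega
end

section
/- Let n ≥ 1, let A₁, A₂, A₃ be n×n complex matrices, and let c, μ, z ∈ ℂ. Let G₁, G₂, G₃ ∈ M_{3n}(ℂ) be the block matrices whose (i,j)-block is c·A_j + δ_{ij}·μ·I_n in the i-th block row and zero elsewhere (i = 1, 2, 3). Then det(G₁ + G₂ + G₃ − z·I_{3n}) = (μ − z)^{2n} · det(c·(A₁ + A₂ + A₃) + (μ − z)·I_n). -/
/-!
Adding up the `G i` gives `(μ - z) • 1 + U * V`, where `U` stacks three copies of `I_n` and `V` is
the block row `(cA₁ cA₂ cA₃)`. Sylvester's determinant identity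
`det (w • I_{3n} + U * V) = w ^ (2n) * det (w • I_n + V * U)` then finishes the proof, since
`V * U = c(A₁ + A₂ + A₃)`.
-/

open Matrix Polynomial

/-- Evaluating the characteristic polynomial identity, rather than cancelling powers of `w`,
keeps the case `w = 0`. -/
theorem Matrix.det_smul_one_add_mul_of_card_le {m n R : Type*} [Fintype m] [Fintype n]
    [DecidableEq m] [DecidableEq n] [CommRing R]
    (U : Matrix m n R) (V : Matrix n m R) (hle : Fintype.card n ≤ Fintype.card m) (w : R) :
    det (w • 1 + U * V) = w ^ (Fintype.card m - Fintype.card n) * det (w • 1 + V * U) := by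
  have h := congrArg (eval w) (charpoly_mul_comm_of_le (-U) V hle)
  simpa [eval_charpoly, smul_one_eq_diagonal] using h

section BlockRow

variable {ι m R : Type*} [DecidableEq m] [CommRing R]

def Matrix.blockRow (A : ι → Matrix m m R) : Matrix m (ι × m) R :=
  of fun p r => A r.1 p r.2

variable (ι m R) in
def Matrix.blockColOne : Matrix (ι × m) m R :=
  of fun p r => (1 : Matrix m m R) p.2 r

variable [Fintype m]

theorem Matrix.blockRow_mul_blockColOne [Fintype ι] (A : ι → Matrix m m R) :
    blockRow A * blockColOne ι m R = ∑ i, A i := by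
  ext p r
  simp [blockRow, blockColOne, mul_apply, Fintype.sum_prod_type, Matrix.sum_apply, one_apply]

theorem Matrix.blockColOne_mul_blockRow_apply (A : ι → Matrix m m R) (i j : ι) (p r : m) :
    (blockColOne ι m R * blockRow A) (i, p) (j, r) = A j p r := by
  simp [blockRow, blockColOne, mul_apply, one_apply]

end BlockRow

theorem det_G_sum_general (n : ℕ) (A : Fin 3 → Matrix (Fin n) (Fin n) ℂ)
    (c μ z : ℂ)
    (G : Fin 3 → Matrix (Fin 3 × Fin n) (Fin 3 × Fin n) ℂ)
    (hG : ∀ i, G i = Matrix.of fun p r : Fin 3 × Fin n =>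
      if p.1 = i then
        c * (A r.1) p.2 r.2 + (if r.1 = i ∧ p.2 = r.2 then μ else 0)
      else 0) :
    (G 0 + G 1 + G 2 - z • (1 : Matrix (Fin 3 × Fin n) (Fin 3 × Fin n) ℂ)).det =
      (μ - z) ^ (2 * n) *
        (c • (A 0 + A 1 + A 2) + (μ - z) • (1 : Matrix (Fin n) (Fin n) ℂ)).det := by
  have hsum : G 0 + G 1 + G 2 - z • 1 =
      (μ - z) • 1 + blockColOne (Fin 3) (Fin n) ℂ * blockRow (c • A) := by
    ext ⟨i, p⟩ ⟨j, r⟩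
    rw [← Fin.sum_univ_three G]
    simp only [hG, Matrix.sub_apply, Matrix.sum_apply, of_apply, Finset.sum_ite_eq, Finset.mem_univ,
      ↓reduceIte, Matrix.add_apply, Matrix.smul_apply, one_apply, Prod.ext_iff, smul_eq_mul,
      mul_ite, mul_one, mul_zero, blockColOne_mul_blockRow_apply, Pi.smul_apply]
    split_ifs <;> grind
  have hcard : Fintype.card (Fin 3 × Fin n) - Fintype.card (Fin n) = 2 * n := by simp; omega
  rw [hsum, det_smul_one_add_mul_of_card_le _ _ (by simp; omega), hcard,
    blockRow_mul_blockColOne, Fin.sum_univ_three, add_comm (_ • 1)]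
  simp [smul_add]

/-- The characteristic polynomial of `G₁ + G₂ + G₃`:
`det(G₁ + G₂ + G₃ − zI) = (μ − z)^{2n}·det(c(A₁ + A₂ + A₃) + (μ − z)I)`. -/
theorem det_G_sum (n : ℕ) (hn : 1 ≤ n) (A : Fin 3 → Matrix (Fin n) (Fin n) ℂ)
    (c μ z : ℂ)
    (G : Fin 3 → Matrix (Fin 3 × Fin n) (Fin 3 × Fin n) ℂ)
    (hG : ∀ i, G i = Matrix.of fun p r : Fin 3 × Fin n =>
      if p.1 = i then
        c * (A r.1) p.2 r.2 + (if r.1 = i ∧ p.2 = r.2 then μ else 0)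
      else 0) :
    (G 0 + G 1 + G 2 - z • (1 : Matrix (Fin 3 × Fin n) (Fin 3 × Fin n) ℂ)).det =
      (μ - z) ^ (2 * n) *
        (c • (A 0 + A 1 + A 2) + (μ - z) • (1 : Matrix (Fin n) (Fin n) ℂ)).det :=
  det_G_sum_general n A c μ z G hG
end

section
/- Let n ≥ 1, let q, c ∈ ℂ with q ≠ 1, put μ = (1 − c)/(1 − q), let e₁, e₂, e₃ ∈ ℂ, and let A₁, A₂, A₃ be n×n complex matrices. Let G₁, G₂, G₃ ∈ M_{3n}(ℂ) be the block matrices whose (i,j)-block is c·A_j + δ_{ij}·μ·I_n in the i-th block row and zero elsewhere. Then for every x ∈ ℂ with x + e_i ≠ 0 and cx + e_i ≠ 0 for i = 1, 2, 3: det( I_{3n} − (1−q)·x·Σ_{i=1}^3 (x + e_i)⁻¹ G_i ) = ∏_{i=1}^3 ((cx + e_i)/(x + e_i))ⁿ · det( I_n − (1−q)·c·x·Σ_{i=1}^3 (cx + e_i)⁻¹ A_i ). -/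
/-!
Put `wᵢ = (x + eᵢ)⁻¹` and `t = (1 - q)x`. Since the `i`-th block row of `Gᵢ` is
`c·(A₁, …, A₃) + μ·(row i of I₃ₙ)`, the matrix `1 - t∑ wᵢGᵢ` factors as `D(1 - XY)` with
`D = diag(1 - tμwᵢ)`, `Y = (A₁ ⋯ A₃)` the block row of the `Aᵢ`, and `X` the block column of
scalar matrices `tc·wᵢ/(1 - tμwᵢ)·Iₙ`. As `1 - tμwᵢ = (cx + eᵢ)/(x + eᵢ)`, the theorem follows
from Sylvester's identity `det(1 - XY) = det(1 - YX)`, because `YX = tc∑ (cx + eᵢ)⁻¹Aᵢ`.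
-/

namespace Matrix

variable {ι l m n R : Type*}

def blockRow_s16 (A : ι → Matrix m n R) : Matrix m (ι × n) R :=
  of fun j r => A r.1 j r.2

def blockCol (B : ι → Matrix m n R) : Matrix (ι × m) n R :=
  of fun p k => B p.1 p.2 k

/-- The matrix `Gᵢ` of the `q`-convolution. -/
def convolutionBlock [DecidableEq ι] [DecidableEq m] [Mul R] [Add R] [Zero R] (c μ : R)
    (A : ι → Matrix m m R) (i : ι) : Matrix (ι × m) (ι × m) R :=
  of fun p r => if p.1 = i then c * A r.1 p.2 r.2 + (if r.1 = i ∧ p.2 = r.2 then μ else 0) else 0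

variable [Fintype ι] [Fintype m] [CommRing R]

theorem blockRow_mul_blockCol (A : ι → Matrix l m R) (B : ι → Matrix m n R) :
    blockRow_s16 A * blockCol B = ∑ i, A i * B i := by
  ext j k
  simp [mul_apply, sum_apply, Fintype.sum_prod_type, blockRow_s16, blockCol]

omit [Fintype ι] in
theorem blockCol_mul_blockRow (B : ι → Matrix l m R) (A : ι → Matrix m n R) :
    blockCol B * blockRow_s16 A = of fun p r => (B p.1 * A r.1) p.2 r.2 := by
  ext p r
  simp [mul_apply, blockRow_s16, blockCol]

theorem sum_smul_convolutionBlock [DecidableEq ι] [DecidableEq m] (c μ : R)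
    (A : ι → Matrix m m R) (w : ι → R) :
    ∑ i, w i • convolutionBlock c μ A i = diagonal (fun p : ι × m => w p.1) *
      (c • (blockCol (fun _ => (1 : Matrix m m R)) * blockRow_s16 A) + μ • 1) := by
  ext p r
  rw [diagonal_mul, blockCol_mul_blockRow, sum_apply, Finset.sum_eq_single p.1]
  · simp [convolutionBlock, one_apply, Prod.ext_iff, eq_comm]
  · intro i _ hi
    simp [convolutionBlock, Ne.symm hi]
  · simp

theorem det_one_sub_smul_sum_smul_convolutionBlock {K : Type*} [Field K] [DecidableEq ι]
    [DecidableEq m] (t c μ : K) (A : ι → Matrix m m K) (w : ι → K)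
    (hw : ∀ i, 1 - t * μ * w i ≠ 0) :
    det (1 - t • ∑ i, w i • convolutionBlock c μ A i) =
      (∏ i, (1 - t * μ * w i)) ^ Fintype.card m *
        det (1 - (t * c) • ∑ i, (w i / (1 - t * μ * w i)) • A i) := by
  set d : ι → K := fun i => 1 - t * μ * w i
  set B : ι → Matrix m m K := fun i => (t * c * (w i / d i)) • 1
  have factor : 1 - t • ∑ i, w i • convolutionBlock c μ A i
      = diagonal (fun p : ι × m => d p.1) * (1 - blockCol B * blockRow_s16 A) := by
    rw [sum_smul_convolutionBlock]
    ext p r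
    simp only [blockCol_mul_blockRow, one_mul, smul_of, sub_apply, one_apply, smul_apply,
      diagonal_mul, add_apply, of_apply, Pi.smul_apply, smul_eq_mul, mul_ite, mul_one, mul_zero,
      Algebra.smul_mul_assoc, d, B]
    have hwd : (1 - t * μ * w p.1) * (w p.1 / (1 - t * μ * w p.1)) = w p.1 :=
      mul_div_cancel₀ _ (hw p.1)
    split_ifs <;> linear_combination (t * c * A r.1 p.2 r.2) * hwd
  have hBA : blockRow_s16 A * blockCol B = (t * c) • ∑ i, (w i / d i) • A i := by
    simp [blockRow_mul_blockCol, B, Finset.smul_sum, smul_smul]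
  rw [factor, det_mul, det_diagonal, det_one_sub_mul_comm, hBA, Fintype.prod_prod_type]
  simp [Finset.prod_pow, d]

end Matrix

theorem det_convolution_general (n : ℕ) (q c : ℂ) (hq : q ≠ 1)
    (e : Fin 3 → ℂ) (A : Fin 3 → Matrix (Fin n) (Fin n) ℂ)
    (G : Fin 3 → Matrix (Fin 3 × Fin n) (Fin 3 × Fin n) ℂ)
    (hG : ∀ i, G i = Matrix.of fun p r : Fin 3 × Fin n =>
      if p.1 = i then
        c * (A r.1) p.2 r.2 + (if r.1 = i ∧ p.2 = r.2 then (1 - c) / (1 - q) else 0)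
      else 0)
    (x : ℂ) (hx1 : ∀ i, x + e i ≠ 0) (hx2 : ∀ i, c * x + e i ≠ 0) :
    ((1 : Matrix (Fin 3 × Fin n) (Fin 3 × Fin n) ℂ)
        - ((1 - q) * x) • ∑ i, (x + e i)⁻¹ • G i).det =
      (∏ i, ((c * x + e i) / (x + e i)) ^ n) *
        ((1 : Matrix (Fin n) (Fin n) ℂ)
          - ((1 - q) * c * x) • ∑ i, (c * x + e i)⁻¹ • A i).det := by
  obtain rfl : G = Matrix.convolutionBlock c ((1 - c) / (1 - q)) A := funext hG
  have hq' : 1 - q ≠ 0 := sub_ne_zero.mpr hq.symm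
  have hd (i : Fin 3) :
      1 - (1 - q) * x * ((1 - c) / (1 - q)) * (x + e i)⁻¹ = (c * x + e i) / (x + e i) := by
    field_simp [hx1 i]
    ring
  have hw (i : Fin 3) : (x + e i)⁻¹ / ((c * x + e i) / (x + e i)) = (c * x + e i)⁻¹ := by
    field_simp [hx1 i, hx2 i]
  rw [Matrix.det_one_sub_smul_sum_smul_convolutionBlock _ _ _ _ _
    fun i => hd i ▸ div_ne_zero (hx2 i) (hx1 i)]
  simp_rw [hd, hw, Fintype.card_fin, ← Finset.prod_pow, mul_right_comm (1 - q) x c]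

/-- Determinant identity for the `q`-convolution:
`det(I₃ₙ − (1−q)xΣᵢ Gᵢ/(x + eᵢ))
  = ∏ᵢ ((cx + eᵢ)/(x + eᵢ))ⁿ · det(Iₙ − (1−q)cxΣᵢ Aᵢ/(cx + eᵢ))`. -/
theorem det_convolution (n : ℕ) (hn : 1 ≤ n) (q c : ℂ) (hq : q ≠ 1)
    (e : Fin 3 → ℂ) (A : Fin 3 → Matrix (Fin n) (Fin n) ℂ)
    (G : Fin 3 → Matrix (Fin 3 × Fin n) (Fin 3 × Fin n) ℂ)
    (hG : ∀ i, G i = Matrix.of fun p r : Fin 3 × Fin n =>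
      if p.1 = i then
        c * (A r.1) p.2 r.2 + (if r.1 = i ∧ p.2 = r.2 then (1 - c) / (1 - q) else 0)
      else 0)
    (x : ℂ) (hx1 : ∀ i, x + e i ≠ 0) (hx2 : ∀ i, c * x + e i ≠ 0) :
    ((1 : Matrix (Fin 3 × Fin n) (Fin 3 × Fin n) ℂ)
        - ((1 - q) * x) • ∑ i, (x + e i)⁻¹ • G i).det =
      (∏ i, ((c * x + e i) / (x + e i)) ^ n) *
        ((1 : Matrix (Fin n) (Fin n) ℂ)
          - ((1 - q) * c * x) • ∑ i, (c * x + e i)⁻¹ • A i).det :=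
  det_convolution_general n q c hq e A G hG x hx1 hx2
end
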